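/- arXiv:1610.03941 — 6 statements merged into one kernel-verified Lean document; each statement's English description precedes it below -/
import Mathlib

section
/- For every probability measure μ on Ω^N, every ε > 0, and every integer n > 2^{N+1}/ε, there exists a magnetization matrix M with N rows and n columns such that for every function f : Ω^N → ℝ one has |E_μ[f(σ)] − ⟨f(σ)⟩_{η_M}| ≤ ε · max_{σ ∈ Ω^N} |f(σ)|. -/
open Finset

/-- The spin value in Ω = {-1, 1} associated to a Boolean. -/
def spin (b : Bool) : ℝ := if b then 1 else -1

/-- The atomic probability distribution η_M on Ω^N associated to a magnetization matrix M,
η_M(σ) = (1/n) Σ_α ∏_i (1 + m_i^α σ_i)/2. -/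
noncomputable def etaM {N n : ℕ} (M : Fin N → Fin n → Bool) (σ : Fin N → Bool) : ℝ :=
  (1 / (n : ℝ)) * ∑ α : Fin n, ∏ i : Fin N, (1 + spin (M i α) * spin (σ i)) / 2

lemma prod_spin {N : ℕ} (a b : Fin N → Bool) :
    (∏ i : Fin N, (1 + spin (a i) * spin (b i)) / 2) = if a = b then 1 else 0 := by
  by_cases h : a = b
  · subst h
    simp only [if_pos rfl]
    apply Finset.prod_eq_one
    intro i _
    cases a i <;> simp [spin]
  · rw [if_neg h]
    obtain ⟨i, hi⟩ : ∃ i, a i ≠ b i := by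
      by_contra hc; push_neg at hc; exact h (funext hc)
    apply Finset.prod_eq_zero (Finset.mem_univ i)
    cases ha : a i <;> cases hb : b i <;> simp_all [spin]


/-- Matrix approximation of μ: for every probability measure μ on Ω^N,
every ε > 0 and every integer n > 2^{N+1}/ε, there exists a magnetization matrix M with
N rows and n columns such that for every f : Ω^N → ℝ,
|E_μ[f(σ)] − ⟨f(σ)⟩_{η_M}| ≤ ε · max_σ |f(σ)|. -/
theorem matrix_approximation
    (N : ℕ) (hN : 0 < N)
    (μ : (Fin N → Bool) → ℝ) (hμ0 : ∀ σ, 0 ≤ μ σ) (hμ1 : ∑ σ, μ σ = 1)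
    (ε : ℝ) (hε : 0 < ε)
    (n : ℕ) (hn : (2 : ℝ) ^ (N + 1) / ε < n) :
    ∃ M : Fin N → Fin n → Bool,
      ∀ f : (Fin N → Bool) → ℝ,
        |(∑ σ, μ σ * f σ) - ∑ σ, etaM M σ * f σ| ≤
          ε * (Finset.univ.sup' Finset.univ_nonempty fun σ : Fin N → Bool => |f σ|) := by
  have hnpos : 0 < (n : ℝ) := lt_of_le_of_lt (by positivity) hn
  have hn0 : (n : ℝ) ≠ 0 := ne_of_gt hnpos
  have hcardS : Fintype.card (Fin N → Bool) = 2 ^ N := by simp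
  set F : (Fin N → Bool) → ℕ := fun σ => ⌊(n : ℝ) * μ σ⌋₊ with hF
  have hFle : ∀ σ, (F σ : ℝ) ≤ (n : ℝ) * μ σ := fun σ =>
    Nat.floor_le (mul_nonneg n.cast_nonneg (hμ0 σ))
  have hFlt : ∀ σ, (n : ℝ) * μ σ < (F σ : ℝ) + 1 := fun σ => Nat.lt_floor_add_one _
  have hsumF_le : ∑ σ, F σ ≤ n := by
    have : ((∑ σ, F σ : ℕ) : ℝ) ≤ (n : ℝ) := by
      push_cast
      calc ∑ σ, (F σ : ℝ) ≤ ∑ σ, (n : ℝ) * μ σ := Finset.sum_le_sum fun σ _ => hFle σ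
        _ = (n : ℝ) * ∑ σ, μ σ := by rw [Finset.mul_sum]
        _ = n := by rw [hμ1, mul_one]
    exact_mod_cast this
  have hr_le : n - ∑ σ, F σ ≤ (Finset.univ : Finset (Fin N → Bool)).card := by
    rw [Finset.card_univ, hcardS]
    have : (n : ℝ) ≤ ((∑ σ, F σ : ℕ) : ℝ) + 2 ^ N := by
      push_cast
      calc (n : ℝ) = (n : ℝ) * ∑ σ, μ σ := by rw [hμ1, mul_one]
        _ = ∑ σ, (n : ℝ) * μ σ := by rw [Finset.mul_sum]
        _ ≤ ∑ σ : Fin N → Bool, ((F σ : ℝ) + 1) := Finset.sum_le_sum fun σ _ => (hFlt σ).le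
        _ = (∑ σ, (F σ : ℝ)) + 2 ^ N := by
            rw [Finset.sum_add_distrib]
            simp [Finset.card_univ, hcardS]
    have hnat : n ≤ ∑ σ, F σ + 2 ^ N := by exact_mod_cast this
    omega
  obtain ⟨T, -, hT⟩ := Finset.exists_subset_card_eq hr_le
  set k : (Fin N → Bool) → ℕ := fun σ => F σ + (if σ ∈ T then 1 else 0) with hk
  have hsumk : ∑ σ, k σ = n := by
    simp only [hk, Finset.sum_add_distrib, Finset.sum_ite_mem, Finset.univ_inter,
      Finset.sum_const, smul_eq_mul, mul_one, hT]
    omega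
  have hcard : Fintype.card (Fin n) = Fintype.card (Σ σ : Fin N → Bool, Fin (k σ)) := by
    simp [Fintype.card_sigma, hsumk]
  let e : Fin n ≃ Σ σ : Fin N → Bool, Fin (k σ) := Fintype.equivOfCardEq hcard
  refine ⟨fun i α => (e α).1 i, ?_⟩
  have heta : ∀ σ : Fin N → Bool, etaM (fun i α => (e α).1 i) σ = (k σ : ℝ) / n := by
    intro σ
    have h1 : ∀ α : Fin n, (∏ i : Fin N, (1 + spin ((e α).1 i) * spin (σ i)) / 2)
        = if (e α).1 = σ then (1 : ℝ) else 0 := fun α => prod_spin _ σ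
    rw [etaM]
    simp only [h1]
    rw [show (∑ α : Fin n, if (e α).1 = σ then (1:ℝ) else 0)
        = ∑ x : Σ s : Fin N → Bool, Fin (k s), (if x.1 = σ then (1:ℝ) else 0) from
      Fintype.sum_equiv e _ _ (fun α => rfl)]
    rw [← Finset.univ_sigma_univ, Finset.sum_sigma]
    have h2 : ∀ x : Fin N → Bool, (∑ _ : Fin (k x), if x = σ then (1:ℝ) else 0)
        = if x = σ then (k x : ℝ) else 0 := by
      intro x; split <;> simp
    simp only [h2]
    rw [Finset.sum_ite_eq' Finset.univ σ (fun s => ((k s : ℝ)))]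
    simp [div_eq_mul_inv, mul_comm]
  have herr : ∀ σ : Fin N → Bool, |μ σ - (k σ : ℝ) / n| ≤ 1 / n := by
    intro σ
    have h1 : (F σ : ℝ) ≤ (k σ : ℝ) := by exact_mod_cast Nat.le_add_right _ _
    have h2 : (k σ : ℝ) ≤ (F σ : ℝ) + 1 := by
      have : k σ ≤ F σ + 1 := by simp only [hk]; split <;> omega
      exact_mod_cast this
    have key : |(n : ℝ) * μ σ - (k σ : ℝ)| ≤ 1 := by
      rw [abs_le]
      constructor <;> nlinarith [hFle σ, hFlt σ]
    have heq : μ σ - (k σ : ℝ) / n = ((n : ℝ) * μ σ - k σ) / n := by field_simp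
    rw [heq, abs_div, abs_of_pos hnpos]
    gcongr
  intro f
  set B := Finset.univ.sup' Finset.univ_nonempty fun σ : Fin N → Bool => |f σ| with hB
  have hfB : ∀ σ, |f σ| ≤ B := fun σ =>
    Finset.le_sup' (fun σ : Fin N → Bool => |f σ|) (Finset.mem_univ σ)
  have hB0 : 0 ≤ B := le_trans (abs_nonneg _) (hfB Classical.ofNonempty)
  have hstep : |(∑ σ, μ σ * f σ) - ∑ σ, etaM (fun i α => (e α).1 i) σ * f σ|
      ≤ ∑ σ : Fin N → Bool, (1 / n) * B := by
    rw [← Finset.sum_sub_distrib]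
    refine le_trans (Finset.abs_sum_le_sum_abs _ _) (Finset.sum_le_sum fun σ _ => ?_)
    rw [heta σ, ← sub_mul, abs_mul]
    exact mul_le_mul (herr σ) (hfB σ) (abs_nonneg _) (by positivity)
  refine le_trans hstep ?_
  rw [Finset.sum_const, Finset.card_univ, hcardS, nsmul_eq_mul]
  have h2N : (2:ℝ) ^ N * (1 / n) ≤ ε := by
    rw [div_lt_iff₀ hε] at hn
    rw [mul_one_div, div_le_iff₀ hnpos]
    have hp : (0:ℝ) < 2 ^ N := by positivity
    have he : (2:ℝ) ^ (N+1) = 2 * 2 ^ N := by ring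
    nlinarith
  push_cast
  calc (2:ℝ) ^ N * (1 / n * B) = (2:ℝ) ^ N * (1/n) * B := by ring
    _ ≤ ε * B := mul_le_mul_of_nonneg_right h2N hB0
end

section
/- Assume L ≥ 1 and that for all pairs of distinct strings α_1…α_ℓ ≠ α'_1…α'_{ℓ'} (0 ≤ ℓ, ℓ' ≤ L+1) one has |C_ψ(α_1…α_ℓ, α'_1…α'_{ℓ'})| ≤ εN/L². Then there exists a collection of nonnegative real numbers γ̃_{α_1…α_ℓ}, one for each string α_1…α_ℓ with 0 ≤ ℓ ≤ L+1, such that for every pair of strings α_1…α_ℓ and α'_1…α'_{ℓ'} one has |C_ψ(α_1…α_ℓ, α'_1…α'_{ℓ'}) − N γ̃²_{α_1…α_ℓ} · 1{α_1…α_ℓ = α'_1…α'_{ℓ'}}| ≤ 2εN. -/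
open Finset

/-- Full strings α₁…α_{L+1} with 1 ≤ α_{ℓ+1} ≤ s_ℓ (0-indexed: α_{ℓ+1} ∈ Fin (s ℓ)). -/
abbrev FullStr (L : ℕ) (s : Fin (L + 1) → ℕ) := ∀ ℓ : Fin (L + 1), Fin (s ℓ)

/-- Two strings have the same prefix of length ℓ. -/
def prefixEq (L : ℕ) {s : Fin (L + 1) → ℕ} (ℓ : ℕ) (A A' : FullStr L s) : Prop :=
  ∀ k : Fin (L + 1), (k : ℕ) < ℓ → A k = A' k

instance (L : ℕ) (s : Fin (L + 1) → ℕ) (ℓ : ℕ) (A A' : FullStr L s) :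
    Decidable (prefixEq L ℓ A A') := by unfold prefixEq; infer_instance

/-- Block average m^{α₁…α_ℓ}: the average of the columns of `M` (labelled through the
bijection `θ`) over all extensions of the length-ℓ prefix of `A`. -/
noncomputable def blockAvg {N n L : ℕ} {s : Fin (L + 1) → ℕ}
    (M : Fin N → Fin n → Bool) (θ : FullStr L s ≃ Fin n)
    (ℓ : ℕ) (A : FullStr L s) (i : Fin N) : ℝ :=
  (∑ B ∈ univ.filter (fun B : FullStr L s => prefixEq L ℓ B A), spin (M i (θ B))) /
    ((univ.filter (fun B : FullStr L s => prefixEq L ℓ B A)).card : ℝ)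

/-- Magnetization increments δm^{α₁…α_ℓ} (with δm = m at the root level ℓ = 0). -/
noncomputable def incr {N n L : ℕ} {s : Fin (L + 1) → ℕ}
    (M : Fin N → Fin n → Bool) (θ : FullStr L s ≃ Fin n)
    (ℓ : ℕ) (A : FullStr L s) (i : Fin N) : ℝ :=
  if ℓ = 0 then blockAvg M θ 0 A i
  else blockAvg M θ ℓ A i - blockAvg M θ (ℓ - 1) A i

/-- ℓ*(α,α'): the largest ℓ ∈ {0,…,L+1} such that the length-ℓ prefixes agree. -/
def lstar {L : ℕ} {s : Fin (L + 1) → ℕ} (A A' : FullStr L s) : ℕ :=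
  ((Finset.range (L + 2)).filter (fun ℓ => prefixEq L ℓ A A')).sup id

lemma prefixEq_mono {L : ℕ} {s : Fin (L + 1) → ℕ} {ℓ ℓ' : ℕ} (h : ℓ' ≤ ℓ)
    {A A' : FullStr L s} (hp : prefixEq L ℓ A A') : prefixEq L ℓ' A A' :=
  fun k hk => hp k (lt_of_lt_of_le hk h)

lemma blockAvg_congr {N n L : ℕ} {s : Fin (L + 1) → ℕ}
    (M : Fin N → Fin n → Bool) (θ : FullStr L s ≃ Fin n)
    {ℓ : ℕ} {A A' : FullStr L s} (hp : prefixEq L ℓ A A') (i : Fin N) :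
    blockAvg M θ ℓ A i = blockAvg M θ ℓ A' i := by
  have hset : univ.filter (fun B : FullStr L s => prefixEq L ℓ B A) =
      univ.filter (fun B : FullStr L s => prefixEq L ℓ B A') := by
    apply Finset.filter_congr
    intro B _
    constructor
    · intro h k hk; rw [h k hk, hp k hk]
    · intro h k hk; rw [h k hk, ← hp k hk]
  unfold blockAvg
  rw [hset]

lemma incr_congr {N n L : ℕ} {s : Fin (L + 1) → ℕ}
    (M : Fin N → Fin n → Bool) (θ : FullStr L s ≃ Fin n)
    {ℓ : ℕ} {A A' : FullStr L s} (hp : prefixEq L ℓ A A') (i : Fin N) :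
    incr M θ ℓ A i = incr M θ ℓ A' i := by
  unfold incr
  by_cases h : ℓ = 0
  · simp only [h, if_true]
    exact blockAvg_congr M θ (by intro k hk; omega) i
  · simp only [h, if_false]
    rw [blockAvg_congr M θ hp i,
      blockAvg_congr M θ (prefixEq_mono (Nat.sub_le ℓ 1) hp) i]

/-- Tree Topology Condition: assume L ≥ 1 and that
|C_ψ(α₁…α_ℓ, α'₁…α'_{ℓ'})| ≤ εN/L² for all pairs of distinct strings (ℓ, ℓ' ≤ L+1).
Then there is a collection of nonnegative reals γ̃_{α₁…α_ℓ}, one for each string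
(i.e. a function of ℓ and of the length-ℓ prefix of a full string), such that for every
pair of strings |C_ψ(α₁…α_ℓ, α'₁…α'_{ℓ'}) − N γ̃²_{α₁…α_ℓ} 1{strings equal}| ≤ 2εN. -/
theorem tree_topology_condition
    (N n L : ℕ) (hN : 0 < N) (hn : 0 < n) (hL : 1 ≤ L)
    (s : Fin (L + 1) → ℕ) (hs : ∀ ℓ, 0 < s ℓ) (hprod : ∏ ℓ, s ℓ = n)
    (ι : Type) [Fintype ι] (w : ι → ℝ) (hw0 : ∀ j, 0 ≤ w j) (hw1 : ∑ j, w j = 1)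
    (Ms : ι → Fin N → Fin n → Bool) (θ : FullStr L s ≃ Fin n)
    (ε : ℝ) (hε : 0 < ε)
    (hoffdiag : ∀ ℓ ℓ' : ℕ, ℓ ≤ L + 1 → ℓ' ≤ L + 1 → ∀ A A' : FullStr L s,
      ¬(ℓ = ℓ' ∧ prefixEq L ℓ A A') →
      |∑ j, w j * ∑ i : Fin N, incr (Ms j) θ ℓ A i * incr (Ms j) θ ℓ' A' i| ≤
        ε * N / L ^ 2) :
    ∃ γ : ℕ → FullStr L s → ℝ,
      (∀ ℓ A, 0 ≤ γ ℓ A) ∧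
      (∀ ℓ : ℕ, ∀ A A' : FullStr L s, prefixEq L ℓ A A' → γ ℓ A = γ ℓ A') ∧
      (∀ ℓ ℓ' : ℕ, ℓ ≤ L + 1 → ℓ' ≤ L + 1 → ∀ A A' : FullStr L s,
        |(∑ j, w j * ∑ i : Fin N, incr (Ms j) θ ℓ A i * incr (Ms j) θ ℓ' A' i) -
            (N : ℝ) * (γ ℓ A) ^ 2 *
              (if ℓ = ℓ' ∧ prefixEq L ℓ A A' then 1 else 0)| ≤ 2 * ε * N) := by
  set C : ℕ → FullStr L s → ℝ :=
    fun ℓ A => ∑ j, w j * ∑ i : Fin N, incr (Ms j) θ ℓ A i * incr (Ms j) θ ℓ A i with hC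
  have hCnonneg : ∀ ℓ A, 0 ≤ C ℓ A := by
    intro ℓ A
    apply Finset.sum_nonneg
    intro j _
    exact mul_nonneg (hw0 j) (Finset.sum_nonneg fun i _ => mul_self_nonneg _)
  refine ⟨fun ℓ A => Real.sqrt (C ℓ A / N), fun ℓ A => Real.sqrt_nonneg _, ?_, ?_⟩
  · intro ℓ A A' hp
    have : C ℓ A = C ℓ A' := by
      simp only [hC]
      congr 1; funext j; congr 1
      exact Finset.sum_congr rfl fun i _ => by rw [incr_congr (Ms j) θ hp i]
    simp only []
    rw [this]
  · intro ℓ ℓ' hℓ hℓ' A A'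
    by_cases h : ℓ = ℓ' ∧ prefixEq L ℓ A A'
    · obtain ⟨hee, hp⟩ := h
      rw [if_pos ⟨hee, hp⟩]
      have hγ : (Real.sqrt (C ℓ A / N)) ^ 2 = C ℓ A / N :=
        Real.sq_sqrt (div_nonneg (hCnonneg ℓ A) (Nat.cast_nonneg N))
      have hCC : (∑ j, w j * ∑ i : Fin N, incr (Ms j) θ ℓ A i * incr (Ms j) θ ℓ' A' i)
          = C ℓ A := by
        simp only [hC]
        refine Finset.sum_congr rfl fun j _ => ?_
        congr 1
        refine Finset.sum_congr rfl fun i _ => ?_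
        rw [← hee, incr_congr (Ms j) θ hp i]
      rw [hCC, hγ, mul_one]
      have hNne : (N : ℝ) ≠ 0 := Nat.cast_ne_zero.mpr hN.ne'
      rw [mul_div_cancel₀ _ hNne, sub_self, abs_zero]
      positivity
    · rw [if_neg h, mul_zero, sub_zero]
      refine le_trans (hoffdiag ℓ ℓ' hℓ hℓ' A A' h) ?_
      have h1 : (1 : ℝ) ≤ (L : ℝ) ^ 2 := by
        have : (1 : ℝ) ≤ (L : ℝ) := by exact_mod_cast hL
        nlinarith
      have : ε * N / L ^ 2 ≤ ε * N :=
        div_le_self (by positivity) h1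
      nlinarith [hε.le, Nat.cast_nonneg (α := ℝ) N]
end

section
/- (Reconstruction Lemma) For any choice of points x̂_k ∈ V̂_k (1 ≤ k ≤ N) and every σ ∈ Ω^N, the measure μ is exactly reconstructed from its magnetization kernel: μ(σ) = ∫_0^1 ∏_{k=1}^{N} (1 + M̂_μ(x̂_k, y) σ_k)/2 dy. -/
open Finset
open scoped Classical

/-- Cumulative weights y_a = Σ_{a' ≤ a} μ(σ^{a'}) (0-indexed: Ycum a = Σ_{b < a} μ(σ^b)),
with respect to the enumeration e of Ω^N = {σ^a}. -/
noncomputable def Ycum (N : ℕ) (μ : (Fin N → Bool) → ℝ)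
    (e : Fin (2 ^ N) ≃ (Fin N → Bool)) (a : ℕ) : ℝ :=
  ∑ b ∈ univ.filter (fun b : Fin (2 ^ N) => (b : ℕ) < a), μ (e b)

/-- The magnetization kernel M̂_μ(x,y) = Σ_a Σ_k σ_k^a 1{x ∈ V̂_k} 1{y ∈ Ŝ_a}, where
V̂_k = [k/N, (k+1)/N) (0-indexed) and Ŝ_a = [Ycum a, Ycum (a+1)). -/
noncomputable def magKernel (N : ℕ) (μ : (Fin N → Bool) → ℝ)
    (e : Fin (2 ^ N) ≃ (Fin N → Bool)) (x y : ℝ) : ℝ :=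
  ∑ a : Fin (2 ^ N), ∑ k : Fin N,
    spin (e a k) *
      (if (k : ℝ) / N ≤ x ∧ x < ((k : ℕ) + 1 : ℝ) / N then 1 else 0) *
      (if Ycum N μ e a ≤ y ∧ y < Ycum N μ e ((a : ℕ) + 1) then 1 else 0)

/-!
On the strip `y ∈ Ŝ_a` the kernel evaluated at `x̂_k` is exactly the spin `σ^a_k`, so the integrand
is `∏_k (1 + σ^a_k σ_k) / 2`, the indicator of `σ^a = σ`. The strips tile `[0, 1]` and `Ŝ_a` has
length `μ(σ^a)`, so the integral picks out `μ(σ)`.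
-/

lemma spin_mul_spin (b b' : Bool) : spin b * spin b' = if b = b' then 1 else -1 := by
  cases b <;> cases b' <;> norm_num [spin]

lemma prod_one_add_spin_mul_spin_div_two {ι : Type*} [Fintype ι] (τ σ : ι → Bool) :
    ∏ k, (1 + spin (τ k) * spin (σ k)) / 2 = if τ = σ then 1 else 0 := by
  split_ifs with h
  · subst h
    simp [spin_mul_spin]
  · obtain ⟨k, hk⟩ := Function.ne_iff.mp h
    exact Finset.prod_eq_zero (mem_univ k) (by simp [spin_mul_spin, hk])

lemma Monotone.eq_of_mem_Ico_of_mem_Ico {β : Type*} [Preorder β] {f : ℕ → β} (hf : Monotone f)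
    {i j : ℕ} {y : β} (hi : y ∈ Set.Ico (f i) (f (i + 1))) (hj : y ∈ Set.Ico (f j) (f (j + 1))) :
    i = j := by
  by_contra hij
  exact Set.disjoint_left.mp (hf.pairwise_disjoint_on_Ico_succ hij) hi hj

lemma monotone_natCast_div {α : Type*} [Semifield α] [LinearOrder α] [IsStrictOrderedRing α]
    (N : ℕ) : Monotone (fun k : ℕ => (k : α) / N) :=
  fun _ _ h => div_le_div_of_nonneg_right (Nat.cast_le.mpr h) N.cast_nonneg

lemma Ycum_zero (N : ℕ) (μ : (Fin N → Bool) → ℝ) (e : Fin (2 ^ N) ≃ (Fin N → Bool)) :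
    Ycum N μ e 0 = 0 := by
  simp [Ycum]

lemma Ycum_two_pow (N : ℕ) (μ : (Fin N → Bool) → ℝ) (e : Fin (2 ^ N) ≃ (Fin N → Bool)) :
    Ycum N μ e (2 ^ N) = ∑ σ, μ σ := by
  simp [Ycum, Equiv.sum_comp e μ]

lemma Ycum_succ (N : ℕ) (μ : (Fin N → Bool) → ℝ) (e : Fin (2 ^ N) ≃ (Fin N → Bool))
    (a : Fin (2 ^ N)) : Ycum N μ e (a + 1) = Ycum N μ e a + μ (e a) := by
  have h : univ.filter (fun b : Fin (2 ^ N) => (b : ℕ) < a + 1)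
      = insert a (univ.filter (fun b : Fin (2 ^ N) => (b : ℕ) < a)) := by
    ext b
    simp only [mem_filter, mem_univ, true_and, mem_insert, Fin.ext_iff]
    omega
  rw [Ycum, Ycum, h, sum_insert (by simp), add_comm]

lemma Ycum_mono (N : ℕ) {μ : (Fin N → Bool) → ℝ} (hμ : ∀ σ, 0 ≤ μ σ)
    (e : Fin (2 ^ N) ≃ (Fin N → Bool)) : Monotone (Ycum N μ e) :=
  fun _ _ hab => sum_le_sum_of_subset_of_nonneg
    (fun _ => by simp only [mem_filter, mem_univ, true_and]; omega) (fun _ _ _ => hμ _)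

lemma magKernel_eq_spin (N : ℕ) {μ : (Fin N → Bool) → ℝ} (hμ : ∀ σ, 0 ≤ μ σ)
    (e : Fin (2 ^ N) ≃ (Fin N → Bool)) {x y : ℝ} {k : Fin N} {a : Fin (2 ^ N)}
    (hx : (k : ℝ) / N ≤ x ∧ x < ((k : ℕ) + 1 : ℝ) / N)
    (hy : Ycum N μ e a ≤ y ∧ y < Ycum N μ e (a + 1)) :
    magKernel N μ e x y = spin (e a k) := by
  have hV : ∀ j : Fin N, ((j : ℝ) / N ≤ x ∧ x < ((j : ℕ) + 1 : ℝ) / N) ↔ j = k := fun j =>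
    ⟨fun hj => Fin.ext ((monotone_natCast_div N).eq_of_mem_Ico_of_mem_Ico (by exact_mod_cast hj)
      (by exact_mod_cast hx)), fun h => h ▸ hx⟩
  have hS : ∀ b : Fin (2 ^ N), (Ycum N μ e b ≤ y ∧ y < Ycum N μ e (b + 1)) ↔ b = a := fun b =>
    ⟨fun hb => Fin.ext ((Ycum_mono N hμ e).eq_of_mem_Ico_of_mem_Ico hb hy), fun h => h ▸ hy⟩
  simp [magKernel, hV, hS]

open Set intervalIntegral in
theorem intervalIntegral.integral_eq_sum_of_eqOn_uIoo {Y : ℕ → ℝ} {f : ℝ → ℝ} {n : ℕ}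
    {c : Fin n → ℝ} (hf : ∀ i : Fin n, EqOn f (fun _ => c i) (uIoo (Y i) (Y (i + 1)))) :
    ∫ y in Y 0..Y n, f y = ∑ i : Fin n, (Y (i + 1) - Y i) * c i := by
  have hint : ∀ i < n, IntervalIntegrable f MeasureTheory.volume (Y i) (Y (i + 1)) :=
    fun i hi => intervalIntegrable_const.congr_uIoo (fun y hy => (hf ⟨i, hi⟩ hy).symm)
  rw [← sum_integral_adjacent_intervals hint, ← Fin.sum_univ_eq_sum_range]
  refine sum_congr rfl fun i _ => ?_
  rw [integral_congr_uIoo (hf i), integral_const, smul_eq_mul]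

theorem reconstruction_lemma_general
    (N : ℕ)
    (μ : (Fin N → Bool) → ℝ) (hμ0 : ∀ σ, 0 ≤ μ σ) (hμ1 : ∑ σ, μ σ = 1)
    (e : Fin (2 ^ N) ≃ (Fin N → Bool))
    (xhat : Fin N → ℝ)
    (hx : ∀ k : Fin N, (k : ℝ) / N ≤ xhat k ∧ xhat k < ((k : ℕ) + 1 : ℝ) / N)
    (σ : Fin N → Bool) :
    μ σ = ∫ y in (0 : ℝ)..1,
        ∏ k : Fin N, (1 + magKernel N μ e (xhat k) y * spin (σ k)) / 2 := by
  set Y := Ycum N μ e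
  have hstep : ∀ a : Fin (2 ^ N),
      Set.EqOn (fun y => ∏ k : Fin N, (1 + magKernel N μ e (xhat k) y * spin (σ k)) / 2)
        (fun _ => if e a = σ then 1 else 0) (Set.uIoo (Y a) (Y (a + 1))) := by
    intro a y hy
    rw [Set.uIoo_of_le (Ycum_mono N hμ0 e (Nat.le_succ a))] at hy
    simp only [magKernel_eq_spin N hμ0 e (hx _) ⟨hy.1.le, hy.2⟩]
    exact prod_one_add_spin_mul_spin_div_two (e a) σ
  calc μ σ = ∑ a, μ (e a) * if e a = σ then 1 else 0 := by
        rw [Equiv.sum_comp e (fun τ => μ τ * if τ = σ then 1 else 0)]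
        simp
    _ = ∑ a : Fin (2 ^ N), (Y (a + 1) - Y a) * if e a = σ then 1 else 0 := by
        simp only [Y, Ycum_succ, add_sub_cancel_left]
    _ = ∫ y in Y 0..Y (2 ^ N), ∏ k : Fin N, (1 + magKernel N μ e (xhat k) y * spin (σ k)) / 2 :=
        (intervalIntegral.integral_eq_sum_of_eqOn_uIoo hstep).symm
    _ = _ := by simp only [Y, Ycum_zero, Ycum_two_pow, hμ1]

/-- Reconstruction Lemma: for any choice of points x̂_k ∈ V̂_k and every
σ ∈ Ω^N, μ(σ) = ∫₀¹ ∏_k (1 + M̂_μ(x̂_k, y) σ_k)/2 dy. -/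
theorem reconstruction_lemma
    (N : ℕ) (hN : 0 < N)
    (μ : (Fin N → Bool) → ℝ) (hμ0 : ∀ σ, 0 ≤ μ σ) (hμ1 : ∑ σ, μ σ = 1)
    (e : Fin (2 ^ N) ≃ (Fin N → Bool))
    (xhat : Fin N → ℝ)
    (hx : ∀ k : Fin N, (k : ℝ) / N ≤ xhat k ∧ xhat k < ((k : ℕ) + 1 : ℝ) / N)
    (σ : Fin N → Bool) :
    μ σ = ∫ y in (0 : ℝ)..1,
        ∏ k : Fin N, (1 + magKernel N μ e (xhat k) y * spin (σ k)) / 2 :=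
  reconstruction_lemma_general N μ hμ0 hμ1 e xhat hx σ
end

section
/- For every nonnegative function g : Ω → ℝ the following chain of inequalities holds between the rectangular system and its square replica version: ⟨∏_{j=1}^{n} g(τ_j)^{1/n}⟩_{η_{M_sq}} ≤ ⟨∏_{i=1}^{N} g(σ_i)⟩_{η_M}^{1/N} ≤ ⟨∏_{j=1}^{n} g(τ_j)⟩_{η_{M_sq}}^{1/n}. -/
open Finset

/-- The index i of the consecutive block V_i ⊆ {1,…,n} (each of size n/N) containing j. -/
def blockIdx (N n : ℕ) (hN : 0 < N) (hn : 0 < n) (hdvd : N ∣ n) (j : Fin n) : Fin N :=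
  ⟨(j : ℕ) / (n / N), by
    have h1 : 0 < n / N := Nat.div_pos (Nat.le_of_dvd hn hdvd) hN
    refine (Nat.div_lt_iff_lt_mul h1).mpr ?_
    have h2 : N * (n / N) = n := Nat.mul_div_cancel' hdvd
    have h3 := j.isLt
    omega⟩

/-- The square magnetization matrix M_sq, with τ_j^α = m_i^α whenever j ∈ V_i. -/
def Msq (N n : ℕ) (hN : 0 < N) (hn : 0 < n) (hdvd : N ∣ n)
    (M : Fin N → Fin n → Bool) : Fin n → Fin n → Bool :=
  fun j α => M (blockIdx N n hN hn hdvd j) α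

lemma spin_sum (a : Bool) (f : Bool → ℝ) :
    ∑ b : Bool, (1 + spin a * spin b) / 2 * f b = f a := by
  cases a <;> simp [spin]

lemma sum_eta {N n : ℕ} (M : Fin N → Fin n → Bool) (f : Fin N → Bool → ℝ) :
    ∑ σ : Fin N → Bool, etaM M σ * ∏ i, f i (σ i)
      = (1 / (n : ℝ)) * ∑ α, ∏ i, f i (M i α) := by
  simp only [etaM, mul_assoc, ← Finset.mul_sum]
  congr 1
  simp only [Finset.sum_mul]
  rw [Finset.sum_comm]
  refine Finset.sum_congr rfl fun α _ => ?_
  have h1 : ∀ σ : Fin N → Bool,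
      (∏ i, (1 + spin (M i α) * spin (σ i)) / 2) * ∏ i, f i (σ i)
        = ∏ i, ((1 + spin (M i α) * spin (σ i)) / 2 * f i (σ i)) := fun σ =>
    (Finset.prod_mul_distrib).symm
  rw [Finset.sum_congr rfl fun σ _ => h1 σ,
    ← Fintype.prod_sum (fun i b => (1 + spin (M i α) * spin b) / 2 * f i b)]
  exact Finset.prod_congr rfl fun i _ => spin_sum (M i α) (f i)

lemma prod_block {N n : ℕ} (hN : 0 < N) (hn : 0 < n) (hdvd : N ∣ n) (F : Fin N → ℝ) :
    ∏ j : Fin n, F (blockIdx N n hN hn hdvd j) = ∏ i : Fin N, F i ^ (n / N) := by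
  set k := n / N with hk
  have hnk : n = N * k := (Nat.mul_div_cancel' hdvd).symm
  have hkpos : 0 < k := Nat.div_pos (Nat.le_of_dvd hn hdvd) hN
  let e : Fin N × Fin k ≃ Fin n := finProdFinEquiv.trans (finCongr hnk.symm)
  rw [← Equiv.prod_comp e (fun j => F (blockIdx N n hN hn hdvd j))]
  have key : ∀ p : Fin N × Fin k, blockIdx N n hN hn hdvd (e p) = p.1 := by
    rintro ⟨a, b⟩
    have : ((e (a, b) : Fin n) : ℕ) = (b : ℕ) + k * (a : ℕ) := rfl
    ext
    simp only [blockIdx, ← hk, this]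
    rw [Nat.add_mul_div_left _ _ hkpos, Nat.div_eq_of_lt b.isLt, Nat.zero_add]
  calc ∏ p : Fin N × Fin k, F (blockIdx N n hN hn hdvd (e p))
      = ∏ p : Fin N × Fin k, F p.1 := by simp [key]
    _ = ∏ i : Fin N, F i ^ k := by rw [Fintype.prod_prod_type]; simp

/-- Square replica bounds: for every nonnegative g : Ω → ℝ,
⟨∏_j g(τ_j)^{1/n}⟩_{η_{M_sq}} ≤ ⟨∏_i g(σ_i)⟩_{η_M}^{1/N} ≤ ⟨∏_j g(τ_j)⟩_{η_{M_sq}}^{1/n}. -/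
theorem square_replica_bounds
    (N n : ℕ) (hN : 0 < N) (hn : 0 < n) (hdvd : N ∣ n)
    (M : Fin N → Fin n → Bool) (g : Bool → ℝ) (hg : ∀ b, 0 ≤ g b) :
    (∑ τ : Fin n → Bool, etaM (Msq N n hN hn hdvd M) τ *
        ∏ j : Fin n, g (τ j) ^ ((1 : ℝ) / n)) ≤
      (∑ σ : Fin N → Bool, etaM M σ * ∏ i : Fin N, g (σ i)) ^ ((1 : ℝ) / N) ∧
    (∑ σ : Fin N → Bool, etaM M σ * ∏ i : Fin N, g (σ i)) ^ ((1 : ℝ) / N) ≤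
      (∑ τ : Fin n → Bool, etaM (Msq N n hN hn hdvd M) τ *
        ∏ j : Fin n, g (τ j)) ^ ((1 : ℝ) / n) := by
  set k := n / N with hkdef
  have hnk : n = N * k := (Nat.mul_div_cancel' hdvd).symm
  have hkpos : 0 < k := Nat.div_pos (Nat.le_of_dvd hn hdvd) hN
  set A : Fin n → ℝ := fun α => ∏ i, g (M i α) with hA
  have hA0 : ∀ α, 0 ≤ A α := fun α => Finset.prod_nonneg fun i _ => hg _
  have hNR : (0:ℝ) < N := Nat.cast_pos.mpr hN
  have hnR : (0:ℝ) < n := Nat.cast_pos.mpr hn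
  have hkn : (k : ℝ) / n = 1 / N := by
    rw [hnk]; push_cast
    rw [div_eq_div_iff (by positivity) (ne_of_gt hNR)]; ring
  -- rewrite middle sum
  have hmid : (∑ σ : Fin N → Bool, etaM M σ * ∏ i : Fin N, g (σ i))
      = (1 / (n:ℝ)) * ∑ α, A α := sum_eta M (fun _ b => g b)
  -- rewrite left sum
  have hleft : (∑ τ : Fin n → Bool, etaM (Msq N n hN hn hdvd M) τ *
        ∏ j : Fin n, g (τ j) ^ ((1 : ℝ) / n))
      = (1 / (n:ℝ)) * ∑ α, (A α) ^ ((1:ℝ)/N) := by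
    rw [sum_eta (Msq N n hN hn hdvd M) (fun _ b => g b ^ ((1:ℝ)/n))]
    congr 1
    refine Finset.sum_congr rfl fun α _ => ?_
    show (∏ j : Fin n, g (M (blockIdx N n hN hn hdvd j) α) ^ ((1:ℝ)/n)) = _
    rw [prod_block hN hn hdvd (fun i => g (M i α) ^ ((1:ℝ)/n)), ← hkdef]
    have : ∀ i : Fin N, (g (M i α) ^ ((1:ℝ)/n)) ^ k = g (M i α) ^ ((1:ℝ)/N) := by
      intro i
      rw [← Real.rpow_natCast (g (M i α) ^ ((1:ℝ)/n)) k,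
        ← Real.rpow_mul (hg _)]
      congr 1
      rw [one_div_mul_eq_div, hkn]
    rw [Finset.prod_congr rfl fun i _ => this i,
      Real.finset_prod_rpow _ _ (fun i _ => hg _)]
  -- rewrite right sum
  have hright : (∑ τ : Fin n → Bool, etaM (Msq N n hN hn hdvd M) τ *
        ∏ j : Fin n, g (τ j))
      = (1 / (n:ℝ)) * ∑ α, (A α) ^ (k:ℝ) := by
    rw [sum_eta (Msq N n hN hn hdvd M) (fun _ b => g b)]
    congr 1
    refine Finset.sum_congr rfl fun α _ => ?_
    show (∏ j : Fin n, g (M (blockIdx N n hN hn hdvd j) α)) = _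
    rw [prod_block hN hn hdvd (fun i => g (M i α)), Finset.prod_pow,
      Real.rpow_natCast]
  rw [hmid, hleft, hright]
  have hw : ∀ α ∈ Finset.univ (α := Fin n), 0 ≤ (1:ℝ)/n := fun _ _ => by positivity
  have hw' : ∑ _α : Fin n, (1:ℝ)/n = 1 := by
    rw [Finset.sum_const, Finset.card_univ, Fintype.card_fin, nsmul_eq_mul]
    field_simp
  constructor
  · -- ∑ w A^{1/N} ≤ (∑ w A)^{1/N}
    have h := Real.arith_mean_le_rpow_mean Finset.univ (fun _ => (1:ℝ)/n)
      (fun α => (A α) ^ ((1:ℝ)/N)) hw hw'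
      (fun α _ => Real.rpow_nonneg (hA0 α) _) (p := (N:ℝ)) (by exact_mod_cast hN)
    have hz : ∀ α, ((A α) ^ ((1:ℝ)/N)) ^ (N:ℝ) = A α := by
      intro α
      rw [← Real.rpow_mul (hA0 α), one_div_mul_cancel (ne_of_gt hNR), Real.rpow_one]
    simp only [hz] at h
    calc (1/(n:ℝ)) * ∑ α, (A α) ^ ((1:ℝ)/N)
        = ∑ α, (1/(n:ℝ)) * (A α) ^ ((1:ℝ)/N) := Finset.mul_sum _ _ _
      _ ≤ (∑ α, (1/(n:ℝ)) * A α) ^ ((1:ℝ)/N) := h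
      _ = ((1/(n:ℝ)) * ∑ α, A α) ^ ((1:ℝ)/N) := by rw [← Finset.mul_sum]
  · -- (∑ w A)^{1/N} ≤ (∑ w A^k)^{1/n}
    have h := Real.rpow_arith_mean_le_arith_mean_rpow Finset.univ (fun _ => (1:ℝ)/n)
      A hw hw' (fun α _ => hA0 α) (p := (k:ℝ)) (by exact_mod_cast hkpos)
    have hS0 : 0 ≤ ∑ α, (1:ℝ)/n * A α :=
      Finset.sum_nonneg fun α _ => mul_nonneg (by positivity) (hA0 α)
    have h2 := Real.rpow_le_rpow (Real.rpow_nonneg hS0 _) h (by positivity : (0:ℝ) ≤ 1/n)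
    rw [← Real.rpow_mul hS0] at h2
    have : (k:ℝ) * (1/n) = 1/N := by rw [mul_one_div, hkn]
    rw [this] at h2
    calc ((1/(n:ℝ)) * ∑ α, A α) ^ ((1:ℝ)/N)
        = (∑ α, (1/(n:ℝ)) * A α) ^ ((1:ℝ)/N) := by rw [← Finset.mul_sum]
      _ ≤ (∑ α, (1/(n:ℝ)) * (A α) ^ (k:ℝ)) ^ ((1:ℝ)/n) := h2
      _ = ((1/(n:ℝ)) * ∑ α, (A α) ^ (k:ℝ)) ^ ((1:ℝ)/n) := by rw [← Finset.mul_sum]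
end

section
/- For every nonnegative function g : Ω → ℝ one has the exact identity ⟨∏_{i=1}^{N} g(σ_i)⟩_{η_M} = ⟨∏_{j=1}^{n} g(τ_j)^{N/n}⟩_{η_{M_sq}}. -/
open Finset

lemma spin_prod_eq (a b : Bool) :
    (1 + spin a * spin b) / 2 = if a = b then (1 : ℝ) else 0 := by
  cases a <;> cases b <;> simp [spin]

/-- Atomic evaluation: ∑_σ η_M(σ) f(σ) = (1/n) ∑_α f(M^α). -/
lemma etaM_expectation {N n : ℕ} (M : Fin N → Fin n → Bool)
    (f : (Fin N → Bool) → ℝ) :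
    (∑ σ : Fin N → Bool, etaM M σ * f σ) =
      (1 / (n : ℝ)) * ∑ α : Fin n, f (fun i => M i α) := by
  simp only [etaM, mul_assoc, ← Finset.mul_sum]
  congr 1
  simp only [Finset.sum_mul]
  rw [Finset.sum_comm]
  refine Finset.sum_congr rfl fun α _ => ?_
  have : ∀ σ : Fin N → Bool,
      (∏ i : Fin N, (1 + spin (M i α) * spin (σ i)) / 2) =
        if (fun i => M i α) = σ then (1 : ℝ) else 0 := by
    intro σ
    simp only [spin_prod_eq]
    rw [Finset.prod_boole]
    simp [funext_iff]
  simp only [this, ite_mul, one_mul, zero_mul]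
  rw [Finset.sum_ite_eq Finset.univ]
  simp

/-- Exact square replica identity: for every nonnegative g : Ω → ℝ,
⟨∏_i g(σ_i)⟩_{η_M} = ⟨∏_j g(τ_j)^{N/n}⟩_{η_{M_sq}}. -/
theorem square_replica_identity
    (N n : ℕ) (hN : 0 < N) (hn : 0 < n) (hdvd : N ∣ n)
    (M : Fin N → Fin n → Bool) (g : Bool → ℝ) (hg : ∀ b, 0 ≤ g b) :
    (∑ σ : Fin N → Bool, etaM M σ * ∏ i : Fin N, g (σ i)) =
      ∑ τ : Fin n → Bool, etaM (Msq N n hN hn hdvd M) τ *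
        ∏ j : Fin n, g (τ j) ^ ((N : ℝ) / n) := by
  rw [etaM_expectation M (fun σ => ∏ i : Fin N, g (σ i)),
    etaM_expectation (Msq N n hN hn hdvd M)
      (fun τ => ∏ j : Fin n, g (τ j) ^ ((N : ℝ) / n))]
  congr 1
  refine Finset.sum_congr rfl fun α _ => ?_
  set q := n / N with hq
  have hq0 : 0 < q := Nat.div_pos (Nat.le_of_dvd hn hdvd) hN
  have hNq : N * q = n := Nat.mul_div_cancel' hdvd
  -- reindex Fin n by Fin N × Fin q
  let e : Fin N × Fin q ≃ Fin n := finProdFinEquiv.trans (finCongr hNq)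
  rw [← Equiv.prod_comp e (fun j => g (Msq N n hN hn hdvd M j α) ^ ((N : ℝ) / n))]
  rw [Fintype.prod_prod_type]
  refine Finset.prod_congr rfl fun i _ => ?_
  have hb : ∀ r : Fin q, blockIdx N n hN hn hdvd (e (i, r)) = i := by
    intro r
    have : ((e (i, r) : Fin n) : ℕ) = r + q * i := rfl
    apply Fin.ext
    simp only [blockIdx, ← hq, this]
    rw [Nat.add_mul_div_left _ _ hq0, Nat.div_eq_of_lt r.isLt, Nat.zero_add]
  simp only [Msq, hb, Finset.prod_const, Finset.card_univ, Fintype.card_fin]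
  rw [← Real.rpow_natCast (g (M i α) ^ ((N : ℝ) / n)) q,
    ← Real.rpow_mul (hg _)]
  have : (N : ℝ) / n * q = 1 := by
    have : (q : ℝ) * N = n := by exact_mod_cast Nat.div_mul_cancel hdvd
    field_simp
    linarith
  rw [this, Real.rpow_one]
end

section
/- Let μ_1,…,μ_T be probability measures on Ω^N and ε > 0. Then for every integer n > 2^{N+1} T / ε there exist magnetization matrices M_1,…,M_T, each with N rows and n columns, such that for every 1 ≤ t ≤ T and every function f : Ω^N → ℝ one has |E_{μ_t}[f(σ)] − ⟨f(σ)⟩_{η_{M_t}}| ≤ ε · max_{σ ∈ Ω^N} |f(σ)|. -/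
open Finset

lemma exists_good_c (S : Type*) [Fintype S] [DecidableEq S] [Nonempty S] (n : ℕ) (hn : 0 < n)
    (μ : S → ℝ) (h0 : ∀ σ, 0 ≤ μ σ) (h1 : ∑ σ, μ σ = 1) :
    ∃ c : Fin n → S, ∀ σ,
      |μ σ - ((Finset.univ.filter (fun α => c α = σ)).card : ℝ) / n| ≤ 1 / n := by
  classical
  set K := Fintype.card S with hKdef
  have hK : 0 < K := Fintype.card_pos
  let e := Fintype.equivFin S
  set G : ℕ → ℝ := fun j => n * ∑ σ ∈ Finset.univ.filter (fun σ => ((e σ : ℕ)) < j), μ σ with hG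
  have hnR : (0:ℝ) < n := by exact_mod_cast hn
  have Gmono : Monotone G := by
    intro j1 j2 h
    apply mul_le_mul_of_nonneg_left _ hnR.le
    apply Finset.sum_le_sum_of_subset_of_nonneg
    · intro σ hσ; simp only [mem_filter, mem_univ, true_and] at *; omega
    · intro σ _ _; exact h0 σ
  have G0 : G 0 = 0 := by simp [hG]
  have GK : ∀ j, K ≤ j → G j = n := by
    intro j hj
    have : Finset.univ.filter (fun σ => ((e σ : ℕ)) < j) = Finset.univ := by
      apply Finset.filter_true_of_mem
      intro σ _; exact lt_of_lt_of_le (e σ).isLt hj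
    simp [hG, this, h1]
  have Gstep : ∀ σ : S, G ((e σ : ℕ) + 1) = G (e σ : ℕ) + n * μ σ := by
    intro σ
    have hins : Finset.univ.filter (fun σ' => ((e σ' : ℕ)) < (e σ : ℕ) + 1)
        = insert σ (Finset.univ.filter (fun σ' => ((e σ' : ℕ)) < (e σ : ℕ))) := by
      ext σ'
      simp only [mem_filter, mem_univ, true_and, mem_insert]
      constructor
      · intro h
        rcases Nat.lt_succ_iff_lt_or_eq.mp h with h' | h'
        · right; exact h'
        · left; exact e.injective (Fin.val_injective h')
      · intro h
        apply Nat.lt_succ_iff_lt_or_eq.mpr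
        rcases h with h' | h'
        · right; exact congrArg (fun x => (e x : ℕ)) h'
        · left; exact h'
    have hnot : σ ∉ Finset.univ.filter (fun σ' => ((e σ' : ℕ)) < (e σ : ℕ)) := by simp
    simp only [hG, hins, Finset.sum_insert hnot]
    ring
  have Gub : ∀ j, G j ≤ n := fun j => by
    rcases le_or_gt K j with h | h
    · exact (GK j h).le
    · exact (Gmono h.le).trans (GK K le_rfl).le
  have Glb : ∀ j, 0 ≤ G j := fun j => G0 ▸ Gmono (Nat.zero_le j)
  have hex : ∀ α : Fin n, ∃ j, (α : ℝ) < G (j + 1) := by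
    intro α
    refine ⟨K, ?_⟩
    rw [GK (K+1) (by omega)]
    exact_mod_cast α.isLt
  have hfind_lt : ∀ α : Fin n, Nat.find (hex α) < K := by
    intro α
    have : Nat.find (hex α) ≤ K - 1 := by
      apply Nat.find_le
      rw [Nat.sub_add_cancel hK, GK K le_rfl]
      exact_mod_cast α.isLt
    omega
  set c : Fin n → S := fun α => e.symm ⟨Nat.find (hex α), hfind_lt α⟩ with hc
  have hfiber : ∀ (σ : S) (α : Fin n),
      c α = σ ↔ (G (e σ : ℕ) ≤ (α : ℝ) ∧ (α : ℝ) < G ((e σ : ℕ) + 1)) := by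
    intro σ α
    have heq : c α = σ ↔ Nat.find (hex α) = (e σ : ℕ) := by
      rw [show c α = e.symm ⟨Nat.find (hex α), hfind_lt α⟩ from rfl,
        Equiv.symm_apply_eq, Fin.ext_iff]
    rw [heq]
    set j := (e σ : ℕ)
    constructor
    · intro h
      constructor
      · by_contra hlt
        push_neg at hlt
        rcases Nat.eq_zero_or_pos j with h0' | h0'
        · rw [h0', G0] at hlt; exact absurd (α.val.cast_nonneg) (not_le.mpr hlt)
        · have := Nat.find_min (hex α) (m := j - 1) (by omega)
          rw [Nat.sub_add_cancel h0'] at this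
          exact this hlt
      · exact h ▸ Nat.find_spec (hex α)
    · rintro ⟨h1', h2'⟩
      have hle : Nat.find (hex α) ≤ j := Nat.find_le h2'
      rcases lt_or_eq_of_le hle with hlt | h
      · exfalso
        have := Nat.find_spec (hex α)
        have : (α : ℝ) < G j := lt_of_lt_of_le this (Gmono (by omega))
        linarith
      · exact h
  refine ⟨c, ?_⟩
  intro σ
  set j := (e σ : ℕ) with hj
  set a := G j
  set b := G (j + 1)
  have hab : a ≤ b := Gmono (by omega)
  have hcard : (Finset.univ.filter (fun α => c α = σ)).card = ⌈b⌉₊ - ⌈a⌉₊ := by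
    have hmap : (Finset.univ.filter (fun α : Fin n => c α = σ)).map
        ⟨Fin.val, Fin.val_injective⟩ = Finset.Ico ⌈a⌉₊ ⌈b⌉₊ := by
      ext m
      simp only [Finset.mem_map, mem_filter, mem_univ, true_and, Function.Embedding.coeFn_mk,
        Finset.mem_Ico]
      constructor
      · rintro ⟨α, hα, rfl⟩
        rw [hfiber σ α] at hα
        exact ⟨Nat.ceil_le.mpr hα.1, Nat.lt_ceil.mpr hα.2⟩
      · rintro ⟨h1', h2'⟩
        have hmn : m < n := by
          have : (m : ℝ) < b := Nat.lt_ceil.mp h2'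
          have := lt_of_lt_of_le this (Gub (j+1))
          exact_mod_cast this
        refine ⟨⟨m, hmn⟩, ?_, rfl⟩
        rw [hfiber]
        exact ⟨Nat.ceil_le.mp h1', Nat.lt_ceil.mp h2'⟩
    have := congrArg Finset.card hmap
    rwa [Finset.card_map, Nat.card_Ico] at this
  rw [hcard]
  have hceil_le : ⌈a⌉₊ ≤ ⌈b⌉₊ := Nat.ceil_le_ceil hab
  have hcast : ((⌈b⌉₊ - ⌈a⌉₊ : ℕ) : ℝ) = (⌈b⌉₊ : ℝ) - ⌈a⌉₊ := Nat.cast_sub hceil_le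
  rw [hcast]
  have hμσ : b - a = n * μ σ := by
    have := Gstep σ; simp only [← hj] at this; linarith [this]
  have h1a : a ≤ ⌈a⌉₊ := Nat.le_ceil a
  have h2a : (⌈a⌉₊ : ℝ) < a + 1 := Nat.ceil_lt_add_one (Glb j)
  have h1b : b ≤ ⌈b⌉₊ := Nat.le_ceil b
  have h2b : (⌈b⌉₊ : ℝ) < b + 1 := Nat.ceil_lt_add_one ((Glb j).trans hab)
  have heq2 : μ σ - ((⌈b⌉₊ : ℝ) - ⌈a⌉₊) / n = ((b - a) - ((⌈b⌉₊ : ℝ) - ⌈a⌉₊)) / n := by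
    field_simp
    linarith [hμσ]
  rw [heq2, abs_le]
  constructor
  · rw [show -(1 / (n:ℝ)) = (-1) / n by ring]
    apply div_le_div_of_nonneg_right ?_ hnR.le |>.trans_eq rfl
    linarith
  · apply (div_le_div_of_nonneg_right ?_ hnR.le).trans_eq rfl
    linarith

/-- Simultaneous matrix approximation: given probability measures
μ₁,…,μ_T on Ω^N and ε > 0, for every integer n > 2^{N+1} T / ε there exist magnetization
matrices M₁,…,M_T, each with N rows and n columns, such that for every 1 ≤ t ≤ T and every
f : Ω^N → ℝ, |E_{μ_t}[f(σ)] − ⟨f(σ)⟩_{η_{M_t}}| ≤ ε · max_σ |f(σ)|. -/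
theorem simultaneous_matrix_approximation
    (N T : ℕ) (hN : 0 < N) (hT : 0 < T)
    (μ : Fin T → (Fin N → Bool) → ℝ)
    (hμ0 : ∀ t σ, 0 ≤ μ t σ) (hμ1 : ∀ t, ∑ σ, μ t σ = 1)
    (ε : ℝ) (hε : 0 < ε)
    (n : ℕ) (hn : (2 : ℝ) ^ (N + 1) * T / ε < n) :
    ∃ M : Fin T → Fin N → Fin n → Bool,
      ∀ t : Fin T, ∀ f : (Fin N → Bool) → ℝ,
        |(∑ σ, μ t σ * f σ) - ∑ σ, etaM (M t) σ * f σ| ≤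
          ε * (Finset.univ.sup' Finset.univ_nonempty fun σ : Fin N → Bool => |f σ|) := by
  classical
  have hTR : (1:ℝ) ≤ T := by exact_mod_cast hT
  have hnR : (0:ℝ) < n := by
    refine lt_trans ?_ hn
    have h2 : (0:ℝ) < (T:ℝ) := by exact_mod_cast hT
    positivity
  have hn0 : 0 < n := by exact_mod_cast hnR
  choose c hcgood using fun t : Fin T =>
    exists_good_c (Fin N → Bool) n hn0 (μ t) (hμ0 t) (hμ1 t)
  refine ⟨fun t i α => c t α i, ?_⟩
  intro t f
  set F : ℝ := Finset.univ.sup' Finset.univ_nonempty fun σ : Fin N → Bool => |f σ| with hF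
  have hfF : ∀ σ, |f σ| ≤ F := fun σ => Finset.le_sup' (fun σ => |f σ|) (mem_univ σ)
  have hF0 : 0 ≤ F := (abs_nonneg _).trans (hfF (Classical.arbitrary _))
  have hprod : ∀ (d σ : Fin N → Bool),
      ∏ i : Fin N, (1 + spin (d i) * spin (σ i)) / 2 = if d = σ then (1:ℝ) else 0 := by
    intro d σ
    by_cases h : d = σ
    · subst h
      rw [if_pos rfl]
      apply Finset.prod_eq_one
      intro i _
      cases hdi : d i <;> simp [spin] <;> norm_num
    · rw [if_neg h]
      have hex : ∃ i, d i ≠ σ i := by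
        by_contra hall; push_neg at hall; exact h (funext hall)
      obtain ⟨i, hi⟩ := hex
      apply Finset.prod_eq_zero (Finset.mem_univ i)
      cases hdi : d i <;> cases hsi : σ i <;> simp_all [spin] <;> norm_num
  have heta : ∀ σ, etaM (fun i α => c t α i) σ
      = ((Finset.univ.filter (fun α => c t α = σ)).card : ℝ) / n := by
    intro σ
    unfold etaM
    simp only [hprod, Finset.sum_boole]
    ring
  calc |(∑ σ, μ t σ * f σ) - ∑ σ, etaM (fun i α => c t α i) σ * f σ|
      = |∑ σ, (μ t σ - ((Finset.univ.filter (fun α => c t α = σ)).card : ℝ) / n) * f σ| := by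
        rw [← Finset.sum_sub_distrib]
        congr 1
        apply Finset.sum_congr rfl
        intro σ _
        rw [heta σ]; ring
    _ ≤ ∑ σ, |(μ t σ - ((Finset.univ.filter (fun α => c t α = σ)).card : ℝ) / n) * f σ| :=
        Finset.abs_sum_le_sum_abs _ _
    _ ≤ ∑ _σ : (Fin N → Bool), (1/(n:ℝ)) * F := by
        apply Finset.sum_le_sum
        intro σ _
        rw [abs_mul]
        exact mul_le_mul (hcgood t σ) (hfF σ) (abs_nonneg _) (by positivity)
    _ = ((2:ℝ)^N / n) * F := by
        rw [Finset.sum_const, Finset.card_univ]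
        have : Fintype.card (Fin N → Bool) = 2 ^ N := by simp
        rw [this]
        push_cast
        ring
    _ ≤ ε * F := by
        apply mul_le_mul_of_nonneg_right _ hF0
        rw [div_le_iff₀ hnR]
        have h' : 2^(N+1) * (T:ℝ) < ε * n := by
          rw [div_lt_iff₀ hε] at hn; linarith [hn]
        have hp : (0:ℝ) < 2^N := by positivity
        have h2 : (2:ℝ)^(N+1) = 2 * 2^N := by rw [pow_succ]; ring
        nlinarith [h', hp, hTR, h2]
end
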